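/- Let α be a multifunction and let ℋ = {H_1, …, H_k} (k ∈ ℕ, k ≥ 1) be a finite chain of nonempty subsets of T with H_i ⊆ H_j whenever i ≤ j. Then the superposition Γ_{H_1}(Γ_{H_2}(⋯ Γ_{H_k}(α) ⋯)) is the ⊑-greatest element of N_ℋ(α): it belongs to N_ℋ(α), and β ⊑ Γ_{H_1}(⋯ Γ_{H_k}(α) ⋯) for every β ∈ N_ℋ(α). -/

import Mathlib

/-!
`Γ_A z` is the greatest `A`-non-anticipative multifunction below `z`, and for `B ⊆ A` the
operator `Γ_B` preserves `A`-non-anticipativity. Applying the operators from the largest set of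
the chain down to the smallest therefore never destroys the constraints already enforced, and
by induction along the chain the superposition is the greatest element of `N_ℋ(α)`.
-/

open Set

/-- Restriction of a set `F` of functions (elements of `Z`) to the set `A ⊆ T`:
`F|_A = {f|_A : f ∈ F}`. -/
def resSet {T X : Type*} {Z : Set (T → X)} (A : Set T) (F : Set ↥Z) : Set (↥A → X) :=
  (fun h : ↥Z => A.restrict (h : T → X)) '' F

/-- A multifunction `z : Ω → 𝒫(Z)` is `A`-non-anticipative if `ω|_A = ω'|_A` implies
`z(ω)|_A = z(ω')|_A`. -/
def NonAnt {T X Y : Type*} (Ω : Set (T → Y)) (Z : Set (T → X)) (A : Set T)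
    (z : ↥Ω → Set ↥Z) : Prop :=
  ∀ ω ω' : ↥Ω, A.restrict (ω : T → Y) = A.restrict (ω' : T → Y) →
    resSet A (z ω) = resSet A (z ω')

/-- `N_ℋ(α)`: the set of `ℋ`-non-anticipative multiselectors of `α`. -/
def Nna {T X Y : Type*} (Ω : Set (T → Y)) (Z : Set (T → X)) (ℋ : Set (Set T))
    (α : ↥Ω → Set ↥Z) : Set (↥Ω → Set ↥Z) :=
  {z | (∀ A ∈ ℋ, NonAnt Ω Z A z) ∧ ∀ ω, z ω ⊆ α ω}

/-- `N°_ℋ(α)`: the set of nonempty-valued `ℋ`-non-anticipative multiselectors of `α`. -/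
def NnaNE {T X Y : Type*} (Ω : Set (T → Y)) (Z : Set (T → X)) (ℋ : Set (Set T))
    (α : ↥Ω → Set ↥Z) : Set (↥Ω → Set ↥Z) :=
  {z ∈ Nna Ω Z ℋ α | ∀ ω, (z ω).Nonempty}

/-- The operator `Γ_A`:
`Γ_A(α)(ω) = {h ∈ α(ω) : h|_A ∈ ⋂_{ω' ∈ Ω, ω'|_A = ω|_A} α(ω')|_A}`. -/
def Gamma {T X Y : Type*} (Ω : Set (T → Y)) (Z : Set (T → X)) (A : Set T)
    (α : ↥Ω → Set ↥Z) : ↥Ω → Set ↥Z :=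
  fun ω => {h ∈ α ω |
    A.restrict (h : T → X) ∈
      ⋂ ω' ∈ {η : ↥Ω | A.restrict (η : T → Y) = A.restrict (ω : T → Y)}, resSet A (α ω')}

theorem Set.domRestrict_eq_domRestrict_of_subset {α β : Type*} {s t : Set α} {f g : α → β}
    (hst : s ⊆ t) (h : t.domRestrict f = t.domRestrict g) :
    s.domRestrict f = s.domRestrict g :=
  domRestrict_eq_domRestrict_iff.2 ((domRestrict_eq_domRestrict_iff.1 h).mono hst)

section Gamma

variable {T X Y : Type*} {Ω : Set (T → Y)} {Z : Set (T → X)} {A B : Set T}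

theorem mem_resSet {F : Set ↥Z} {g : ↥A → X} :
    g ∈ resSet A F ↔ ∃ h ∈ F, A.domRestrict (h : T → X) = g :=
  Iff.rfl

theorem domRestrict_mem_resSet {F : Set ↥Z} {h : ↥Z} (hh : h ∈ F) :
    A.domRestrict (h : T → X) ∈ resSet A F :=
  ⟨h, hh, rfl⟩

theorem resSet_mono {F G : Set ↥Z} (h : F ⊆ G) : resSet A F ⊆ resSet A G :=
  image_mono h

theorem mem_Gamma {α : ↥Ω → Set ↥Z} {ω : ↥Ω} {h : ↥Z} :
    h ∈ Gamma Ω Z A α ω ↔ h ∈ α ω ∧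
      ∀ η : ↥Ω, A.domRestrict (η : T → Y) = A.domRestrict (ω : T → Y) →
        A.domRestrict (h : T → X) ∈ resSet A (α η) := by
  simp only [Gamma, mem_iInter]
  rfl

theorem Gamma_le (A : Set T) (α : ↥Ω → Set ↥Z) : Gamma Ω Z A α ≤ α :=
  fun _ _ hh => (mem_Gamma.1 hh).1

theorem NonAnt.of_resSet_subset {z : ↥Ω → Set ↥Z}
    (hz : ∀ ω ω' : ↥Ω, A.domRestrict (ω : T → Y) = A.domRestrict (ω' : T → Y) →
      resSet A (z ω) ⊆ resSet A (z ω')) :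
    NonAnt Ω Z A z :=
  fun ω ω' h => (hz ω ω' h).antisymm (hz ω' ω h.symm)

theorem nonAnt_Gamma (A : Set T) (α : ↥Ω → Set ↥Z) : NonAnt Ω Z A (Gamma Ω Z A α) := by
  refine NonAnt.of_resSet_subset fun ω ω' hωω' => ?_
  rintro _ ⟨h, hh, rfl⟩
  obtain ⟨-, hhA⟩ := mem_Gamma.1 hh
  obtain ⟨h', hh'α, hh'⟩ := mem_resSet.1 (hhA ω' hωω'.symm)
  refine ⟨h', mem_Gamma.2 ⟨hh'α, fun η hη => ?_⟩, hh'⟩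
  rw [hh']
  exact hhA η (hη.trans hωω'.symm)

theorem NonAnt.Gamma_of_subset {z : ↥Ω → Set ↥Z} (hz : NonAnt Ω Z A z) (hBA : B ⊆ A) :
    NonAnt Ω Z A (Gamma Ω Z B z) := by
  refine NonAnt.of_resSet_subset fun ω ω' hωω' => ?_
  rintro _ ⟨h, hh, rfl⟩
  obtain ⟨hhz, hhB⟩ := mem_Gamma.1 hh
  obtain ⟨h', hh'z, hh'⟩ :=
    mem_resSet.1 (hz ω ω' hωω' ▸ domRestrict_mem_resSet (A := A) hhz)
  refine ⟨h', mem_Gamma.2 ⟨hh'z, fun η hη => ?_⟩, hh'⟩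
  rw [domRestrict_eq_domRestrict_of_subset hBA hh']
  exact hhB η (hη.trans (domRestrict_eq_domRestrict_of_subset hBA hωω').symm)

theorem NonAnt.le_Gamma {β z : ↥Ω → Set ↥Z} (hβ : NonAnt Ω Z A β) (hβz : β ≤ z) :
    β ≤ Gamma Ω Z A z := by
  intro ω h hh
  refine mem_Gamma.2 ⟨hβz ω hh, fun η hη => resSet_mono (hβz η) ?_⟩
  exact hβ ω η hη.symm ▸ domRestrict_mem_resSet hh

theorem isGreatest_Nna_empty (α : ↥Ω → Set ↥Z) : IsGreatest (Nna Ω Z ∅ α) α :=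
  ⟨⟨fun _ h => h.elim, fun _ => subset_rfl⟩, fun _ hβ => hβ.2⟩

theorem IsGreatest.Gamma_Nna_insert {ℋ : Set (Set T)} {α z : ↥Ω → Set ↥Z}
    (hz : IsGreatest (Nna Ω Z ℋ α) z) (hB : ∀ A ∈ ℋ, B ⊆ A) :
    IsGreatest (Nna Ω Z (insert B ℋ) α) (Gamma Ω Z B z) := by
  refine ⟨⟨forall_mem_insert.2 ⟨nonAnt_Gamma B z, fun A hA => ?_⟩,
    (Gamma_le B z).trans hz.1.2⟩, fun β hβ => ?_⟩
  · exact (hz.1.1 A hA).Gamma_of_subset (hB A hA)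
  · obtain ⟨hβB, hβℋ⟩ := forall_mem_insert.1 hβ.1
    exact hβB.le_Gamma (hz.2 ⟨hβℋ, hβ.2⟩)

theorem isGreatest_Nna_foldr_Gamma {L : List (Set T)} (hL : L.Pairwise (· ⊆ ·))
    (α : ↥Ω → Set ↥Z) :
    IsGreatest (Nna Ω Z {A | A ∈ L} α) (L.foldr (Gamma Ω Z) α) := by
  induction L with
  | nil =>
    simpa only [List.foldr_nil, List.not_mem_nil, ofPred_false] using isGreatest_Nna_empty α
  | cons B L ih =>
    obtain ⟨hB, hL⟩ := List.pairwise_cons.1 hL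
    simpa only [List.foldr_cons, List.mem_cons, ofPred_or, ofPred_eq_eq_singleton, ← insert_eq]
      using (ih hL).Gamma_Nna_insert hB

end Gamma

theorem stmt11_general {T X Y : Type*}
    (Ω : Set (T → Y)) (Z : Set (T → X))
    (k : ℕ) (H : Fin k → Set T)
    (hchain : ∀ i j : Fin k, i ≤ j → H i ⊆ H j)
    (α : ↥Ω → Set ↥Z) :
    (List.ofFn H).foldr (Gamma Ω Z) α ∈ Nna Ω Z (Set.range H) α ∧
      ∀ β ∈ Nna Ω Z (Set.range H) α, ∀ ω : ↥Ω,
        β ω ⊆ (List.ofFn H).foldr (Gamma Ω Z) α ω := by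
  have hL : (List.ofFn H).Pairwise (· ⊆ ·) :=
    List.pairwise_ofFn.2 fun i j hij => hchain i j hij.le
  have hℋ : {A | A ∈ List.ofFn H} = range H := by
    ext A
    exact List.mem_ofFn' H A
  obtain ⟨hmem, hmax⟩ := hℋ ▸ isGreatest_Nna_foldr_Gamma hL α
  exact ⟨hmem, fun β hβ => hmax hβ⟩

/-- For a finite chain `ℋ = {H 0 ⊆ H 1 ⊆ ⋯ ⊆ H (k-1)}` of nonempty subsets of
`T`, the superposition `Γ_{H 0}(Γ_{H 1}(⋯ Γ_{H (k-1)}(α) ⋯))` is the `⊑`-greatest element of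
`N_ℋ(α)`. -/
theorem stmt11 {T X Y : Type*} [Nonempty T] [Nonempty X] [Nonempty Y]
    (Ω : Set (T → Y)) (Z : Set (T → X)) (hΩ : Ω.Nonempty) (hZ : Z.Nonempty)
    (k : ℕ) (hk : 1 ≤ k) (H : Fin k → Set T) (hne : ∀ i, (H i).Nonempty)
    (hchain : ∀ i j : Fin k, i ≤ j → H i ⊆ H j)
    (α : ↥Ω → Set ↥Z) :
    (List.ofFn H).foldr (Gamma Ω Z) α ∈ Nna Ω Z (Set.range H) α ∧
      ∀ β ∈ Nna Ω Z (Set.range H) α, ∀ ω : ↥Ω,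
        β ω ⊆ (List.ofFn H).foldr (Gamma Ω Z) α ω :=
  stmt11_general Ω Z k H hchain α
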